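/- arXiv:1409.6983 — 5 statements merged into one kernel-verified Lean document; each statement's English description precedes it below -/
import Mathlib

section
/- Let C be a nonempty open convex cone in ℝⁿ with C ≠ ℝⁿ, and let h : C → ℝ be a positive, continuous, strictly convex function such that h(tu) = h(u)/t for all real t > 0 and all u ∈ C, and such that h(uᵢ) → ∞ for every sequence of points uᵢ ∈ C converging to a point of the topological boundary of C. Then for every u ∈ C and every nonzero v in the topological closure of C, one has h(u + v) < h(u). -/
/-!
Convexity and homogeneity of degree `-1` give, for `a + b = 1` with `a, b > 0`, the bound
`h (u + v) ≤ a² h u + b² h v` on the cone (write `a • (u + v) = a • u + b • ((a / b) • v)`);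
the choice `a : b = h v : h u` makes it `h (u + v) ≤ h u h v / (h u + h v) ≤ h u`.
Writing `u + v = (1 - δ) • u + (δ • u + v)` and letting `δ → 0` extends `h (u + v) ≤ h u` to
`v ∈ closure C`. Finally `u + v` is the midpoint of `u` and `u + 2 • v`, so strict convexity
makes the inequality strict.
-/

open Filter Topology Set

def IsPosCone {E : Type*} [AddCommGroup E] [Module ℝ E] (C : Set E) : Prop :=
  ∀ t : ℝ, 0 < t → ∀ x ∈ C, t • x ∈ C

namespace IsPosCone

variable {E : Type*} [AddCommGroup E] [Module ℝ E] {C : Set E} {h : E → ℝ} {u v : E}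

protected theorem closure [TopologicalSpace E] [ContinuousConstSMul ℝ E] (hC : IsPosCone C) :
    IsPosCone (closure C) := fun t ht _ hv =>
  map_mem_closure (continuous_const_smul t) hv fun x hx => hC t ht x hx

theorem add_mem (hC : IsPosCone C) (hconv : Convex ℝ C) (hu : u ∈ C) (hv : v ∈ C) :
    u + v ∈ C := by
  have hmid : (2 : ℝ) • ((1 / 2 : ℝ) • u + (1 / 2 : ℝ) • v) = u + v := by module
  exact hmid ▸ hC 2 two_pos _ (hconv hu hv (by norm_num) (by norm_num) (by norm_num))

theorem add_mem_of_mem_closure [TopologicalSpace E] [IsTopologicalAddGroup E]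
    [ContinuousConstSMul ℝ E] (hC : IsPosCone C) (hopen : IsOpen C) (hconv : Convex ℝ C)
    (hu : u ∈ C) (hv : v ∈ closure C) : u + v ∈ C := by
  have hmid : (1 / 2 : ℝ) • ((2 : ℝ) • u) + (1 / 2 : ℝ) • ((2 : ℝ) • v) = u + v := by module
  have hcomb := hconv.combo_interior_closure_mem_interior (a := 1 / 2) (b := 1 / 2)
    (hopen.interior_eq.symm ▸ hC 2 two_pos u hu) (hC.closure 2 two_pos v hv)
    (by norm_num) (by norm_num) (by norm_num)
  rwa [hopen.interior_eq, hmid] at hcomb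

theorem apply_add_le_sq_mul_add_sq_mul (hC : IsPosCone C) (hh : ConvexOn ℝ C h)
    (hhom : ∀ t : ℝ, 0 < t → ∀ u ∈ C, h (t • u) = h u / t) (hu : u ∈ C) (hv : v ∈ C)
    {a b : ℝ} (ha : 0 < a) (hb : 0 < b) (hab : a + b = 1) :
    h (u + v) ≤ a ^ 2 * h u + b ^ 2 * h v := by
  have hcomb := hh.2 hu (hC (a / b) (by positivity) v hv) ha.le hb.le hab
  have hsum : a • u + b • (a / b) • v = a • (u + v) := by
    rw [smul_smul, mul_div_cancel₀ a hb.ne', smul_add]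
  rw [hsum, hhom a ha _ (hC.add_mem hh.1 hu hv), hhom _ (by positivity) v hv, div_le_iff₀ ha,
    smul_eq_mul, smul_eq_mul] at hcomb
  calc h (u + v) ≤ (a * h u + b * (h v / (a / b))) * a := hcomb
    _ = a ^ 2 * h u + b ^ 2 * h v := by field_simp

theorem apply_add_le (hC : IsPosCone C) (hh : ConvexOn ℝ C h) (hpos : ∀ u ∈ C, 0 < h u)
    (hhom : ∀ t : ℝ, 0 < t → ∀ u ∈ C, h (t • u) = h u / t) (hu : u ∈ C) (hv : v ∈ C) :
    h (u + v) ≤ h u := by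
  have hu0 := hpos u hu
  have hv0 := hpos v hv
  calc h (u + v) ≤ (h v / (h u + h v)) ^ 2 * h u + (h u / (h u + h v)) ^ 2 * h v :=
        hC.apply_add_le_sq_mul_add_sq_mul hh hhom hu hv (by positivity) (by positivity)
          (by field_simp; ring)
    _ = h u * (h v / (h u + h v)) := by field_simp; ring
    _ ≤ h u := mul_le_of_le_one_right hu0.le ((div_le_one (by positivity)).2 (by linarith))

variable [TopologicalSpace E] [IsTopologicalAddGroup E] [ContinuousConstSMul ℝ E]

theorem apply_add_le_of_mem_closure (hC : IsPosCone C) (hopen : IsOpen C)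
    (hh : ConvexOn ℝ C h) (hpos : ∀ u ∈ C, 0 < h u)
    (hhom : ∀ t : ℝ, 0 < t → ∀ u ∈ C, h (t • u) = h u / t) (hu : u ∈ C) (hv : v ∈ closure C) :
    h (u + v) ≤ h u := by
  have hbound : ∀ δ ∈ Ioo (0 : ℝ) 1, h (u + v) ≤ h u / (1 - δ) := by
    rintro δ ⟨hδ0, hδ1⟩
    have hsplit : (1 - δ) • u + (δ • u + v) = u + v := by module
    rw [← hhom _ (by linarith) u hu, ← hsplit]
    exact hC.apply_add_le hh hpos hhom (hC _ (by linarith) u hu)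
      (hC.add_mem_of_mem_closure hopen hh.1 (hC δ hδ0 u hu) hv)
  have hlim : Tendsto (fun δ : ℝ => h u / (1 - δ)) (𝓝[>] 0) (𝓝 (h u)) := by
    have hcont : ContinuousAt (fun δ : ℝ => h u / (1 - δ)) 0 := by fun_prop (disch := norm_num)
    simpa using hcont.tendsto.mono_left nhdsWithin_le_nhds
  exact ge_of_tendsto hlim (eventually_of_mem (Ioo_mem_nhdsGT one_pos) hbound)

theorem apply_add_lt (hC : IsPosCone C) (hopen : IsOpen C) (hh : StrictConvexOn ℝ C h)
    (hpos : ∀ u ∈ C, 0 < h u) (hhom : ∀ t : ℝ, 0 < t → ∀ u ∈ C, h (t • u) = h u / t)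
    (hu : u ∈ C) (hv : v ∈ closure C) (hv0 : v ≠ 0) : h (u + v) < h u := by
  have h2v : (2 : ℝ) • v ∈ closure C := hC.closure 2 two_pos v hv
  have hne : u ≠ u + (2 : ℝ) • v := by simpa [eq_comm (a := u)] using hv0
  have hmid : (1 / 2 : ℝ) • u + (1 / 2 : ℝ) • (u + (2 : ℝ) • v) = u + v := by module
  have hlt := hh.2 hu (hC.add_mem_of_mem_closure hopen hh.1 hu h2v) hne
    (by norm_num : (0 : ℝ) < 1 / 2) (by norm_num : (0 : ℝ) < 1 / 2) (by norm_num)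
  rw [hmid, smul_eq_mul, smul_eq_mul] at hlt
  linarith [hC.apply_add_le_of_mem_closure hopen hh.convexOn hpos hhom hu h2v]

end IsPosCone

theorem stmt0_general (n : ℕ) (C : Set (Fin n → ℝ)) (h : (Fin n → ℝ) → ℝ)
    (hopen : IsOpen C)
    (hcone : ∀ t : ℝ, 0 < t → ∀ x ∈ C, t • x ∈ C)
    (hpos : ∀ u ∈ C, 0 < h u)
    (hsconv : StrictConvexOn ℝ C h)
    (hhom : ∀ t : ℝ, 0 < t → ∀ u ∈ C, h (t • u) = h u / t) :
    ∀ u ∈ C, ∀ v ∈ closure C, v ≠ 0 → h (u + v) < h u :=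
  fun _ hu _ hv hv0 => IsPosCone.apply_add_lt hcone hopen hsconv hpos hhom hu hv hv0

/-- For a nonempty open convex cone `C ⊊ ℝⁿ` and a positive, continuous,
strictly convex function `h` on `C`, homogeneous of degree `-1` and blowing up at the
boundary of `C`, one has `h (u + v) < h u` for all `u ∈ C` and nonzero `v ∈ closure C`. -/
theorem stmt0 (n : ℕ) (C : Set (Fin n → ℝ)) (h : (Fin n → ℝ) → ℝ)
    (hne : C.Nonempty) (hopen : IsOpen C) (hconv : Convex ℝ C)
    (hcone : ∀ t : ℝ, 0 < t → ∀ x ∈ C, t • x ∈ C)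
    (hCne : C ≠ Set.univ)
    (hpos : ∀ u ∈ C, 0 < h u)
    (hcont : ContinuousOn h C)
    (hsconv : StrictConvexOn ℝ C h)
    (hhom : ∀ t : ℝ, 0 < t → ∀ u ∈ C, h (t • u) = h u / t)
    (hblow : ∀ (u : ℕ → (Fin n → ℝ)) (x : Fin n → ℝ), (∀ i, u i ∈ C) →
      Filter.Tendsto u Filter.atTop (nhds x) → x ∈ frontier C →
      Filter.Tendsto (fun i => h (u i)) Filter.atTop Filter.atTop) :
    ∀ u ∈ C, ∀ v ∈ closure C, v ≠ 0 → h (u + v) < h u :=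
  stmt0_general n C h hopen hcone hpos hsconv hhom
end

section
/- Let C be a nonempty open convex cone in ℝⁿ, let h : C → ℝ be a positive convex function satisfying h(tu) = h(u)/t for all real t > 0 and u ∈ C, and let L : ℝⁿ → ℝ be a linear functional with L(x) > 0 for all x ∈ C. Then the function x ↦ L(x)·h(x) on C is bounded on positive combinations by its values at the generating points: for any x₁, …, x_m ∈ C and any s₁, …, s_m ≥ 0, not all zero, the point z = s₁x₁ + ⋯ + s_m x_m lies in C and satisfies L(z)h(z) ≤ max_{1 ≤ i ≤ m} L(xᵢ)h(xᵢ). -/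
/-!
Homogeneity of degree `-1` makes `g x = L x * h x` constant on rays, and on the slice
`{L = 1}` of the cone `g` coincides with the convex function `h`. Normalising both endpoints
of a segment to the slice maps the segment to a segment of the slice, so `g` is quasiconvex on
the cone; a positive combination is a positive multiple of a center of mass, at which `g` is
bounded by its maximum over the points.
-/

section HomogeneousOfDegreeNegOne

variable {E : Type*} [AddCommGroup E] [Module ℝ E] {C : Set E} {h : E → ℝ} {L : E →ₗ[ℝ] ℝ}

theorem linear_mul_apply_smul (hhom : ∀ t : ℝ, 0 < t → ∀ u ∈ C, h (t • u) = h u / t)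
    {t : ℝ} (ht : 0 < t) {u : E} (hu : u ∈ C) : L (t • u) * h (t • u) = L u * h u := by
  rw [hhom t ht u hu, map_smul, smul_eq_mul]
  field_simp

theorem apply_inv_smul_self (hhom : ∀ t : ℝ, 0 < t → ∀ u ∈ C, h (t • u) = h u / t)
    {u : E} (hu : u ∈ C) (hLu : 0 < L u) : h ((L u)⁻¹ • u) = L u * h u := by
  have := linear_mul_apply_smul (L := L) hhom (inv_pos.2 hLu) hu
  rwa [map_smul, smul_eq_mul, inv_mul_cancel₀ hLu.ne', one_mul] at this

theorem quasiconvexOn_linear_mul (hconv : Convex ℝ C)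
    (hcone : ∀ t : ℝ, 0 < t → ∀ x ∈ C, t • x ∈ C) (hcvx : ConvexOn ℝ C h)
    (hhom : ∀ t : ℝ, 0 < t → ∀ u ∈ C, h (t • u) = h u / t) (hLpos : ∀ x ∈ C, 0 < L x) :
    QuasiconvexOn ℝ C (fun x => L x * h x) := by
  refine quasiconvexOn_iff_le_max.2 ⟨hconv, fun x hx y hy a b ha hb hab => ?_⟩
  have hLx := hLpos x hx
  have hLy := hLpos y hy
  set T := a * L x + b * L y
  have hT : 0 < T := by
    rcases ha.eq_or_lt with rfl | ha'
    · simp_all [T]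
    · positivity
  have hx' : (L x)⁻¹ • x ∈ C := hcone _ (inv_pos.2 hLx) x hx
  have hy' : (L y)⁻¹ • y ∈ C := hcone _ (inv_pos.2 hLy) y hy
  have ha' : 0 ≤ a * L x / T := by positivity
  have hb' : 0 ≤ b * L y / T := by positivity
  have hab' : a * L x / T + b * L y / T = 1 := by rw [← add_div, div_self hT.ne']
  set w := (a * L x / T) • (L x)⁻¹ • x + (b * L y / T) • (L y)⁻¹ • y
  have hw : w ∈ C := hconv hx' hy' ha' hb' hab'
  have hsplit : a • x + b • y = T • w := by
    simp only [w, smul_add, smul_smul]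
    congr 2 <;> field_simp
  have hLw : L w = 1 := by
    simp only [w, map_add, map_smul, smul_eq_mul]
    rw [← hab']
    field_simp
  calc L (a • x + b • y) * h (a • x + b • y) = h w := by
        rw [hsplit, linear_mul_apply_smul hhom hT hw, hLw, one_mul]
    _ ≤ max (h ((L x)⁻¹ • x)) (h ((L y)⁻¹ • y)) := hcvx.le_on_segment' hx' hy' ha' hb' hab'
    _ = max (L x * h x) (L y * h y) := by
        rw [apply_inv_smul_self hhom hx hLx, apply_inv_smul_self hhom hy hLy]

end HomogeneousOfDegreeNegOne

theorem stmt1_general (n : ℕ) (C : Set (Fin n → ℝ)) (h : (Fin n → ℝ) → ℝ)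
    (L : (Fin n → ℝ) →ₗ[ℝ] ℝ)
    (hconv : Convex ℝ C)
    (hcone : ∀ t : ℝ, 0 < t → ∀ x ∈ C, t • x ∈ C)
    (hcvx : ConvexOn ℝ C h)
    (hhom : ∀ t : ℝ, 0 < t → ∀ u ∈ C, h (t • u) = h u / t)
    (hLpos : ∀ x ∈ C, 0 < L x) :
    ∀ (m : ℕ) (x : Fin m → (Fin n → ℝ)) (s : Fin m → ℝ),
      (∀ i, x i ∈ C) → (∀ i, 0 ≤ s i) → ∀ hs : ∃ i, s i ≠ 0,
      (∑ i, s i • x i) ∈ C ∧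
        L (∑ i, s i • x i) * h (∑ i, s i • x i) ≤
          Finset.univ.sup' (Finset.univ_nonempty_iff.mpr ⟨hs.choose⟩)
            (fun i => L (x i) * h (x i)) := by
  intro m x s hxC hs0 hs
  set M := Finset.univ.sup' (Finset.univ_nonempty_iff.mpr ⟨hs.choose⟩)
    (fun i => L (x i) * h (x i))
  have hS : 0 < ∑ i, s i :=
    Finset.sum_pos' (fun i _ => hs0 i)
      ⟨hs.choose, Finset.mem_univ _, (hs0 _).lt_of_ne' hs.choose_spec⟩
  have hz : ∑ i, s i • x i = (∑ i, s i) • Finset.univ.centerMass s x := by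
    rw [Finset.centerMass, smul_smul, mul_inv_cancel₀ hS.ne', one_smul]
  have hw : Finset.univ.centerMass s x ∈ {u ∈ C | L u * h u ≤ M} :=
    (quasiconvexOn_linear_mul hconv hcone hcvx hhom hLpos M).centerMass_mem
      (fun i _ => hs0 i) hS
      (fun i _ => ⟨hxC i, Finset.le_sup' (fun j => L (x j) * h (x j)) (Finset.mem_univ i)⟩)
  rw [hz]
  exact ⟨hcone _ hS _ hw.1, (linear_mul_apply_smul hhom hS hw.1).trans_le hw.2⟩

/-- For a nonempty open convex cone `C ⊆ ℝⁿ`, a positive convex function `h`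
on `C` homogeneous of degree `-1`, and a linear functional `L` positive on `C`, the function
`x ↦ L x * h x` is bounded on positive combinations by its values at the generating points:
`z = ∑ sᵢ • xᵢ` lies in `C` and `L z * h z ≤ max_i (L xᵢ * h xᵢ)`. -/
theorem stmt1 (n : ℕ) (C : Set (Fin n → ℝ)) (h : (Fin n → ℝ) → ℝ)
    (L : (Fin n → ℝ) →ₗ[ℝ] ℝ)
    (hne : C.Nonempty) (hopen : IsOpen C) (hconv : Convex ℝ C)
    (hcone : ∀ t : ℝ, 0 < t → ∀ x ∈ C, t • x ∈ C)
    (hpos : ∀ u ∈ C, 0 < h u)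
    (hcvx : ConvexOn ℝ C h)
    (hhom : ∀ t : ℝ, 0 < t → ∀ u ∈ C, h (t • u) = h u / t)
    (hLpos : ∀ x ∈ C, 0 < L x) :
    ∀ (m : ℕ) (x : Fin m → (Fin n → ℝ)) (s : Fin m → ℝ),
      (∀ i, x i ∈ C) → (∀ i, 0 ≤ s i) → ∀ hs : ∃ i, s i ≠ 0,
      (∑ i, s i • x i) ∈ C ∧
        L (∑ i, s i • x i) * h (∑ i, s i • x i) ≤
          Finset.univ.sup' (Finset.univ_nonempty_iff.mpr ⟨hs.choose⟩)
            (fun i => L (x i) * h (x i)) :=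
  stmt1_general n C h L hconv hcone hcvx hhom hLpos
end

section
/- Let h₁ : ℝ → ℝ be a function that is convex on the interval (−1, 1), attains its minimum over (−1, 1) at 0, and satisfies h₁(0) = 4·log φ, where φ = (1+√5)/2 is the golden ratio, together with the estimate h₁(1/2) − h₁(3/7) ≤ 1.06/14. Then for every t with 0 < t ≤ 3/7 one has (1 − (2/3)t)·h₁(t) < 4·log φ. -/
/-!
Convexity bounds the slope of `h₁` on `[0, 3/7]` by its slope on `[3/7, 1/2]`, which the
difference estimate makes at most `1.06`; hence `h₁ t ≤ 4 log φ + 1.06 t`. Multiplying by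
`1 - 2t/3` loses `(2/3) t · 4 log φ`, which beats the gain `1.06 t` because `4 log φ > 1.6`.
-/

open Real

section Slope

variable {𝕜 : Type*} [Field 𝕜] [LinearOrder 𝕜] [IsStrictOrderedRing 𝕜] {s : Set 𝕜} {f : 𝕜 → 𝕜}

theorem ConvexOn.sub_le_mul_slope_of_le (hf : ConvexOn 𝕜 s f) {a x b c : 𝕜} (ha : a ∈ s)
    (hx : x ∈ s) (hb : b ∈ s) (hc : c ∈ s) (hax : a < x) (hxb : x ≤ b) (hbc : b < c) :
    f x - f a ≤ (x - a) * ((f c - f b) / (c - b)) := by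
  have hab : a < b := hax.trans_le hxb
  have h_left : (f x - f a) / (x - a) ≤ (f b - f a) / (b - a) :=
    hf.secant_mono ha hx hb hax.ne' hab.ne' hxb
  have h_adj : (f b - f a) / (b - a) ≤ (f c - f b) / (c - b) :=
    hf.slope_mono_adjacent ha hc hab hbc
  rw [div_le_iff₀ (sub_pos.2 hax)] at h_left
  calc f x - f a ≤ (f b - f a) / (b - a) * (x - a) := h_left
    _ ≤ (f c - f b) / (c - b) * (x - a) := by gcongr
    _ = (x - a) * ((f c - f b) / (c - b)) := mul_comm _ _

end Slope

theorem exp_two_fifths_lt_goldenRatio : exp (2 / 5) < goldenRatio := by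
  have h_sqrt : (2.2 : ℝ) < √5 := by rw [lt_sqrt (by norm_num)]; norm_num
  have h_gold : (1.6 : ℝ) < goldenRatio := by rw [goldenRatio]; linarith
  have h_pow : exp (2 / 5) ^ 5 < 1.6 ^ 5 := by
    rw [← exp_nat_mul]
    calc exp ((5 : ℕ) * (2 / 5)) = exp 1 * exp 1 := by rw [← exp_add]; norm_num
      _ < 2.7182818286 * 2.7182818286 := by gcongr <;> exact exp_one_lt_d9
      _ < 1.6 ^ 5 := by norm_num
  exact (lt_of_pow_lt_pow_left₀ 5 (by norm_num) h_pow).trans h_gold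

theorem two_fifths_lt_log_goldenRatio : 2 / 5 < log goldenRatio :=
  (lt_log_iff_exp_lt goldenRatio_pos).2 exp_two_fifths_lt_goldenRatio

theorem stmt2_general (h₁ : ℝ → ℝ)
    (hcvx : ConvexOn ℝ (Set.Ioo (-1 : ℝ) 1) h₁)
    (hval : h₁ 0 = 4 * Real.log ((1 + Real.sqrt 5) / 2))
    (hdiff : h₁ (1/2) - h₁ (3/7) ≤ 1.06 / 14) :
    ∀ t : ℝ, 0 < t → t ≤ 3/7 →
      (1 - (2/3) * t) * h₁ t < 4 * Real.log ((1 + Real.sqrt 5) / 2) := by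
  intro t ht ht'
  have h_slope : (h₁ (1/2) - h₁ (3/7)) / (1/2 - 3/7) ≤ 1.06 := by
    rw [div_le_iff₀ (by norm_num)]; linarith
  have h_growth : h₁ t - h₁ 0 ≤ t * 1.06 :=
    calc h₁ t - h₁ 0 ≤ (t - 0) * ((h₁ (1/2) - h₁ (3/7)) / (1/2 - 3/7)) :=
          hcvx.sub_le_mul_slope_of_le (by norm_num) ⟨by linarith, by linarith⟩ (by norm_num)
            (by norm_num) ht ht' (by norm_num)
      _ ≤ t * 1.06 := by rw [sub_zero]; gcongr
  have h_log : (1.6 : ℝ) < 4 * log ((1 + √5) / 2) := by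
    linarith [two_fifths_lt_log_goldenRatio]
  rw [hval] at h_growth
  nlinarith [mul_le_mul_of_nonneg_left h_growth (by linarith : (0 : ℝ) ≤ 1 - 2 / 3 * t)]

/-- If `h₁` is convex on `(-1, 1)`, minimized over `(-1,1)` at `0` with
`h₁ 0 = 4 log φ` (`φ` the golden ratio), and `h₁ (1/2) - h₁ (3/7) ≤ 1.06/14`, then
`(1 - (2/3) t) * h₁ t < 4 log φ` for all `0 < t ≤ 3/7`. -/
theorem stmt2 (h₁ : ℝ → ℝ)
    (hcvx : ConvexOn ℝ (Set.Ioo (-1 : ℝ) 1) h₁)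
    (hmin : ∀ t ∈ Set.Ioo (-1 : ℝ) 1, h₁ 0 ≤ h₁ t)
    (hval : h₁ 0 = 4 * Real.log ((1 + Real.sqrt 5) / 2))
    (hdiff : h₁ (1/2) - h₁ (3/7) ≤ 1.06 / 14) :
    ∀ t : ℝ, 0 < t → t ≤ 3/7 →
      (1 - (2/3) * t) * h₁ t < 4 * Real.log ((1 + Real.sqrt 5) / 2) :=
  stmt2_general h₁ hcvx hval hdiff
end

section
/- Every real root of the polynomial x⁴ − x³ − x² − x + 1 is strictly less than φ², where φ = (1+√5)/2 is the golden ratio. -/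
/-!
Above `2` the quartic is positive, since there `x² - x - 1 ≥ 1` and
`x⁴ - x³ - x² - x + 1 = x² (x² - x - 1) - x + 1`; so every real root is below `2`,
while `φ² = φ + 1 > 2`.
-/

open Real

lemma quartic_pos_of_two_le {x : ℝ} (hx : 2 ≤ x) : 0 < x ^ 4 - x ^ 3 - x ^ 2 - x + 1 := by
  have hquad : 1 ≤ x ^ 2 - x - 1 := by nlinarith
  calc (0 : ℝ) < x ^ 2 * 1 - x + 1 := by nlinarith
    _ ≤ x ^ 2 * (x ^ 2 - x - 1) - x + 1 := by gcongr
    _ = x ^ 4 - x ^ 3 - x ^ 2 - x + 1 := by ring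

lemma two_lt_goldenRatio_sq : 2 < goldenRatio ^ 2 := by
  rw [goldenRatio_sq]
  linarith [one_lt_goldenRatio]

/-- Every real root of `x⁴ − x³ − x² − x + 1` is strictly less than `φ²`,
where `φ = (1+√5)/2` is the golden ratio. -/
theorem stmt6 :
    ∀ x : ℝ, x^4 - x^3 - x^2 - x + 1 = 0 → x < ((1 + Real.sqrt 5) / 2)^2 := by
  intro x hroot
  have hx : x < 2 := by
    by_contra! h
    exact (quartic_pos_of_two_le h).ne' hroot
  exact hx.trans two_lt_goldenRatio_sq
end

section
/- Let λ be the largest real root of the polynomial x⁴ − x³ − x² − x + 1 and let μ be the largest real root of the polynomial x¹⁴ − x¹⁰ − x⁷ − x⁴ + 1 (both polynomials have real roots greater than 1, since both take the value −1 at x = 1 and tend to +∞). Then 14·(4·log λ − 14·log μ) ≤ 1.06. -/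
/-!
Every root of `L₁₂(x) = x⁴ − x³ − x² − x + 1` is positive and at most `1.722084`, where `L₁₂` is
already positive and increasing, while `L₃₇(x) = x¹⁴ − x¹⁰ − x⁷ − x⁴ + 1` changes sign on
`[1.1617044, 2]`, so its largest root is at least `1.1617044`. The claim then reduces to
`1.722084⁴ / 1.1617044¹⁴ ≤ exp (1.06 / 14)`, which the cubic Taylor polynomial of `exp` already
certifies. Since `14 (4 log λ − 14 log μ) ≈ 1.05986`, the two roots must be pinned down to six or
seven digits.
-/

open Real Set

theorem le_of_forall_root_le {f : ℝ → ℝ} {a b r : ℝ} (hab : a ≤ b)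
    (hf : ContinuousOn f (Icc a b)) (ha : f a ≤ 0) (hb : 0 ≤ f b)
    (hr : ∀ x, f x = 0 → x ≤ r) : a ≤ r := by
  obtain ⟨x, hx, hfx⟩ := intermediate_value_Icc hab hf ⟨ha, hb⟩
  exact hx.1.trans (hr x hfx)

theorem L12_root_pos {l : ℝ} (hl : l^4 - l^3 - l^2 - l + 1 = 0) : 0 < l := by
  by_contra! h
  nlinarith [sq_nonneg (l^2 - 1), sq_nonneg l, mul_nonneg (sq_nonneg l) (neg_nonneg.2 h)]

theorem L12_root_le {l : ℝ} (hl : l^4 - l^3 - l^2 - l + 1 = 0) : l ≤ 1.722084 := by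
  by_contra! h
  have hc : 0 < (1.722084 : ℝ)^4 - 1.722084^3 - 1.722084^2 - 1.722084 + 1 := by norm_num
  have hd := sub_pos.2 h
  nlinarith [mul_pos hd hd, mul_pos (mul_pos hd hd) hd]

theorem le_of_forall_L37_root_le {m : ℝ}
    (hm : ∀ x : ℝ, x^14 - x^10 - x^7 - x^4 + 1 = 0 → x ≤ m) : 1.1617044 ≤ m :=
  le_of_forall_root_le (f := fun x ↦ x^14 - x^10 - x^7 - x^4 + 1) (b := 2) (by norm_num)
    (by fun_prop) (by norm_num) (by norm_num) hm

theorem four_mul_log_sub_fourteen_mul_log_le :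
    4 * log 1.722084 - 14 * log 1.1617044 ≤ 1.06 / 14 := by
  have hratio : (1.722084 : ℝ)^4 / 1.1617044^14 ≤ exp (1.06 / 14) :=
    calc (1.722084 : ℝ)^4 / 1.1617044^14
        ≤ ∑ i ∈ Finset.range 4, (1.06 / 14 : ℝ)^i / i.factorial := by
          norm_num [Finset.sum_range_succ, Nat.factorial]
      _ ≤ exp (1.06 / 14) := sum_le_exp_of_nonneg (by norm_num) 4
  calc 4 * log 1.722084 - 14 * log 1.1617044 = log ((1.722084 : ℝ)^4 / 1.1617044^14) := by
        rw [log_div (by positivity) (by positivity), log_pow, log_pow]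
        norm_num
    _ ≤ 1.06 / 14 := (log_le_iff_le_exp (by positivity)).2 hratio

theorem stmt7_general (l m : ℝ)
    (hl : l^4 - l^3 - l^2 - l + 1 = 0)
    (hmmax : ∀ x : ℝ, x^14 - x^10 - x^7 - x^4 + 1 = 0 → x ≤ m) :
    14 * (4 * Real.log l - 14 * Real.log m) ≤ 1.06 := by
  have hl₀ := L12_root_pos hl
  have hlc := L12_root_le hl
  have hmd := le_of_forall_L37_root_le hmmax
  have hlog : 4 * log l - 14 * log m ≤ 4 * log 1.722084 - 14 * log 1.1617044 := by
    gcongr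
  linarith [four_mul_log_sub_fourteen_mul_log_le]

/-- If `l` is the largest real root of `x⁴ − x³ − x² − x + 1` and `m` is the
largest real root of `x¹⁴ − x¹⁰ − x⁷ − x⁴ + 1`, then `14 (4 log l − 14 log m) ≤ 1.06`. -/
theorem stmt7 (l m : ℝ)
    (hl : l^4 - l^3 - l^2 - l + 1 = 0)
    (hlmax : ∀ x : ℝ, x^4 - x^3 - x^2 - x + 1 = 0 → x ≤ l)
    (hm : m^14 - m^10 - m^7 - m^4 + 1 = 0)
    (hmmax : ∀ x : ℝ, x^14 - x^10 - x^7 - x^4 + 1 = 0 → x ≤ m) :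
    14 * (4 * Real.log l - 14 * Real.log m) ≤ 1.06 :=
  stmt7_general l m hl hmmax
end
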